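/- Let T be the 26-letter alphabet of capital letters and let φ: Σ_2* → T* be the monoid homomorphism determined by φ(a_1) = BEG, φ(b_1) = END, φ(a_2) = FOR, φ(b_2) = END (each image a word of length 3). Then the restriction of φ to the Dyck language D_2 is injective: for all u, v ∈ D_2, φ(u) = φ(v) implies u = v. -/
import Mathlib


/-- The Dyck language over `n` kinds of parentheses. -/
inductive Dyck (n : ℕ) : List (Fin n × Bool) → Prop
  | nil : Dyck n []
  | append {u v : List (Fin n × Bool)} : Dyck n u → Dyck n v → Dyck n (u ++ v)
  | wrap {w : List (Fin n × Bool)} (i : Fin n) :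
      Dyck n w → Dyck n ((i, true) :: (w ++ [(i, false)]))

/-- The 26-letter alphabet of capital letters, `A = 0, B = 1, …, Z = 25`. -/
abbrev Capital : Type := Fin 26

/-- The word "BEG" over the capital-letter alphabet. -/
def BEG : List Capital := [1, 4, 6]

/-- The word "END" over the capital-letter alphabet. -/
def END : List Capital := [4, 13, 3]

/-- The word "FOR" over the capital-letter alphabet. -/
def FOR : List Capital := [5, 14, 17]

/-- The letterwise description of `φ : Σ₂* → T*`:
`φ(a₁) = BEG`, `φ(b₁) = END`, `φ(a₂) = FOR`, `φ(b₂) = END`. -/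
def phiLetter : Fin 2 × Bool → List Capital
  | (⟨0, _⟩, true) => BEG
  | (⟨0, _⟩, false) => END
  | (⟨1, _⟩, true) => FOR
  | (⟨1, _⟩, false) => END

/-- The extension of `φ` to a monoid homomorphism `Σ₂* → T*`. -/
def phi (u : List (Fin 2 × Bool)) : List Capital := (u.map phiLetter).flatten

/-- Projection forgetting the kind of closing brackets. -/
def proj (x : Fin 2 × Bool) : Option (Fin 2) := if x.2 then some x.1 else none

lemma phiLetter_length (a : Fin 2 × Bool) : (phiLetter a).length = 3 := by
  revert a; decide

lemma phiLetter_proj {a b : Fin 2 × Bool} (h : phiLetter a = phiLetter b) :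
    proj a = proj b := by
  revert h; revert a b; decide

lemma phi_proj : ∀ u v : List (Fin 2 × Bool), phi u = phi v →
    u.map proj = v.map proj := by
  intro u
  induction u with
  | nil =>
    intro v h
    cases v with
    | nil => rfl
    | cons b v' =>
      exfalso
      simp only [phi, List.map_cons, List.flatten_cons, List.map_nil,
        List.flatten_nil] at h
      have := congrArg List.length h
      simp [phiLetter_length] at this
      omega
  | cons a u' ih =>
    intro v h
    cases v with
    | nil =>
      exfalso
      simp only [phi, List.map_cons, List.flatten_cons, List.map_nil,
        List.flatten_nil] at h
      have := congrArg List.length h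
      simp [phiLetter_length] at this
    | cons b v' =>
      simp only [phi, List.map_cons, List.flatten_cons] at h
      have hlen : (phiLetter a).length = (phiLetter b).length := by
        rw [phiLetter_length, phiLetter_length]
      obtain ⟨h1, h2⟩ := List.append_inj h hlen
      simp only [List.map_cons]
      rw [phiLetter_proj h1, ih v' h2]

/-- Deterministic reconstruction of a word from its projection, using a stack. -/
def decode : List (Fin 2) → List (Option (Fin 2)) → Option (List (Fin 2 × Bool))
  | _, [] => some []
  | s, (some i) :: rest => (decode (i :: s) rest).map (fun w => (i, true) :: w)
  | [], none :: _ => none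
  | (i :: s), none :: rest => (decode s rest).map (fun w => (i, false) :: w)

lemma decode_dyck {u : List (Fin 2 × Bool)} (hu : Dyck 2 u) :
    ∀ s t, decode s (u.map proj ++ t) = (decode s t).map (fun w => u ++ w) := by
  induction hu with
  | nil =>
    intro s t
    simp only [List.map_nil, List.nil_append]
    cases h : decode s t <;> simp
  | append hu hv ihu ihv =>
    intro s t
    rw [List.map_append, List.append_assoc, ihu, ihv, Option.map_map]
    cases h : decode s t <;> simp
  | @wrap w i hw ih =>
    intro s t
    simp only [List.map_cons, List.map_append, List.cons_append, List.append_assoc,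
      List.singleton_append, List.map_nil, List.nil_append,
      show proj (i, true) = some i from rfl, show proj (i, false) = none from rfl]
    simp only [decode]
    rw [ih]
    simp only [decode]
    cases h : decode s t <;> simp

lemma decode_eq {u : List (Fin 2 × Bool)} (hu : Dyck 2 u) :
    decode [] (u.map proj) = some u := by
  have := decode_dyck hu [] []
  simpa [decode] using this

/-- The restriction of `φ` to the Dyck language `D₂` is injective. -/
theorem stmt_13 :
    ∀ u v : List (Fin 2 × Bool), Dyck 2 u → Dyck 2 v → phi u = phi v → u = v := by
  intro u v hu hv h
  have hp := phi_proj u v h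
  have h1 := decode_eq hu
  have h2 := decode_eq hv
  rw [hp, h2] at h1
  exact (Option.some_injective _ h1).symm
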